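/- Suppose every job j in a job set J' for a two-machine flow shop satisfies p_{1j} + p_{2j} ≤ C'/ρ with ρ = 3/2, the Johnson schedule of J' has makespan C', and max( sum_{j∈J'} p_{1j}, sum_{j∈J'} p_{2j} ) ≤ (1+ε)·L for some L > 0 with L ≤ C* where C* is a makespan lower bound satisfying max-machine-load ≤ C*. Then C' ≤ (3/2)(1+ε)·C*. -/

import Mathlib

/-!
Johnson's rule orders the jobs with `p₁ < p₂` before those with `p₁ ≥ p₂`. If the critical
job `ν` has `p₁ ν ≥ p₂ ν`, every later job does too, so the second-machine tail after `ν` is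
dominated by the first-machine tail and the makespan is at most `∑ p₁ + p₂ ν`; symmetrically it
is at most `∑ p₂ + p₁ ν` otherwise. Hence `C' ≤ load + min (p₁ ν) (p₂ ν) ≤ load + C' / 3`, i.e.
`C' ≤ (3/2) · load ≤ (3/2)(1 + ε) C*`.
-/

open Finset OrderDual

section CriticalPath

variable {ι M : Type*} [Fintype ι] [LinearOrder ι] [AddCommMonoid M]

/-- The length of the path through the two-machine schedule that switches machines at job `ν`;
the makespan of a permutation schedule is the maximum of these over `ν`. -/
def criticalPathLength (p₁ p₂ : ι → M) (ν : ι) : M :=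
  ∑ j with j ≤ ν, p₁ j + ∑ j with ν ≤ j, p₂ j

lemma sum_filter_le_add_sum_filter_gt (f : ι → M) (ν : ι) :
    ∑ j with j ≤ ν, f j + ∑ j with ν < j, f j = ∑ j, f j := by
  simpa only [not_le] using sum_filter_add_sum_filter_not univ (· ≤ ν) f

lemma sum_filter_ge_eq_add_sum_filter_gt (f : ι → M) (ν : ι) :
    ∑ j with ν ≤ j, f j = f ν + ∑ j with ν < j, f j := by
  have : univ.filter (ν ≤ ·) = insert ν (univ.filter (ν < ·)) := by
    ext j
    simp [le_iff_eq_or_lt, eq_comm]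
  rw [this, sum_insert (by simp)]

lemma criticalPathLength_toDual (p₁ p₂ : ι → M) (ν : ι) :
    criticalPathLength (p₂ ∘ ofDual) (p₁ ∘ ofDual) (toDual ν) = criticalPathLength p₁ p₂ ν :=
  add_comm _ _

variable [PartialOrder M] [IsOrderedAddMonoid M] {p₁ p₂ : ι → M} {ν : ι}

lemma criticalPathLength_le_of_forall_gt (h : ∀ j, ν < j → p₂ j ≤ p₁ j) :
    criticalPathLength p₁ p₂ ν ≤ ∑ j, p₁ j + p₂ ν := by
  have tail : ∑ j with ν < j, p₂ j ≤ ∑ j with ν < j, p₁ j :=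
    sum_le_sum fun j hj ↦ h j (mem_filter.mp hj).2
  calc criticalPathLength p₁ p₂ ν
      = ∑ j with j ≤ ν, p₁ j + ∑ j with ν < j, p₂ j + p₂ ν := by
        rw [criticalPathLength, sum_filter_ge_eq_add_sum_filter_gt, add_left_comm, add_comm (p₂ ν),
          add_assoc]
    _ ≤ ∑ j with j ≤ ν, p₁ j + ∑ j with ν < j, p₁ j + p₂ ν := by gcongr
    _ = ∑ j, p₁ j + p₂ ν := by rw [sum_filter_le_add_sum_filter_gt]

lemma criticalPathLength_le_of_forall_lt (h : ∀ j, j < ν → p₁ j ≤ p₂ j) :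
    criticalPathLength p₁ p₂ ν ≤ ∑ j, p₂ j + p₁ ν := by
  rw [← criticalPathLength_toDual]
  exact criticalPathLength_le_of_forall_gt (ι := ιᵒᵈ) fun j hj ↦ h (ofDual j) hj

end CriticalPath

theorem criticalPathLength_le_max_add_min {ι M : Type*} [Fintype ι] [LinearOrder ι]
    [AddCommMonoid M] [LinearOrder M] [IsOrderedAddMonoid M] {p₁ p₂ : ι → M}
    (hJ : ∀ k l : ι, k < l → p₂ k ≤ p₁ k → p₂ l ≤ p₁ l) (ν : ι) :
    criticalPathLength p₁ p₂ ν ≤ max (∑ j, p₁ j) (∑ j, p₂ j) + min (p₁ ν) (p₂ ν) := by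
  rcases le_or_gt (p₂ ν) (p₁ ν) with hν | hν
  · calc criticalPathLength p₁ p₂ ν ≤ ∑ j, p₁ j + p₂ ν :=
          criticalPathLength_le_of_forall_gt fun j hj ↦ hJ ν j hj hν
      _ ≤ _ := add_le_add (le_max_left _ _) (le_min hν le_rfl)
  · calc criticalPathLength p₁ p₂ ν ≤ ∑ j, p₂ j + p₁ ν :=
          criticalPathLength_le_of_forall_lt fun j hj ↦ le_of_not_gt fun hj' ↦
            (hJ j ν hj hj'.le).not_gt hν
      _ ≤ _ := add_le_add (le_max_right _ _) (le_min le_rfl hν.le)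

theorem par_case_analysis_two_machines_general
    (n : ℕ) (p1 p2 : Fin n → ℝ)
    -- Johnson order: every job scheduled after a job with `p₁ ≥ p₂` also
    -- satisfies `p₁ ≥ p₂`
    (hJ : ∀ k l : Fin n, k < l → p2 k ≤ p1 k → p2 l ≤ p1 l)
    (C' L Cstar ε : ℝ) (hε : 0 ≤ ε) (hLC : L ≤ Cstar)
    (hload : max (∑ j, p1 j) (∑ j, p2 j) ≤ (1 + ε) * L)
    (hjobs : ∀ j, p1 j + p2 j ≤ C' / (3 / 2 : ℝ))
    (ν : Fin n)
    (hC' : C' = (∑ j ∈ Finset.univ.filter (fun j => j ≤ ν), p1 j) +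
                (∑ j ∈ Finset.univ.filter (fun j => ν ≤ j), p2 j)) :
    C' ≤ (3 / 2) * (1 + ε) * Cstar := by
  have hpath : C' ≤ max (∑ j, p1 j) (∑ j, p2 j) + min (p1 ν) (p2 ν) :=
    hC' ▸ criticalPathLength_le_max_add_min hJ ν
  have hmin : min (p1 ν) (p2 ν) ≤ (p1 ν + p2 ν) / 2 := by
    linarith [min_le_left (p1 ν) (p2 ν), min_le_right (p1 ν) (p2 ν)]
  have hloadC : (1 + ε) * L ≤ (1 + ε) * Cstar :=
    mul_le_mul_of_nonneg_left hLC (by linarith)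
  linarith [hjobs ν]

/-- If every job of a two-machine job set satisfies
`p₁ j + p₂ j ≤ C' / ρ` with `ρ = 3/2`, the Johnson schedule has makespan `C'`
(with critical job `ν`), and both machine loads are at most `(1+ε)·L` with
`0 < L ≤ C*` (where `C*` is a makespan lower bound dominating the machine
loads), then `C' ≤ (3/2)(1+ε)·C*`. -/
theorem par_case_analysis_two_machines
    (n : ℕ) (p1 p2 : Fin n → ℝ)
    (hp1 : ∀ j, 0 ≤ p1 j) (hp2 : ∀ j, 0 ≤ p2 j)
    -- Johnson order: every job scheduled after a job with `p₁ ≥ p₂` also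
    -- satisfies `p₁ ≥ p₂`
    (hJ : ∀ k l : Fin n, k < l → p2 k ≤ p1 k → p2 l ≤ p1 l)
    (C' L Cstar ε : ℝ) (hε : 0 ≤ ε) (hL : 0 < L) (hLC : L ≤ Cstar)
    (hload : max (∑ j, p1 j) (∑ j, p2 j) ≤ (1 + ε) * L)
    (hloadC : max (∑ j, p1 j) (∑ j, p2 j) ≤ Cstar)
    (hjobs : ∀ j, p1 j + p2 j ≤ C' / (3 / 2 : ℝ))
    (ν : Fin n)
    (hC' : C' = (∑ j ∈ Finset.univ.filter (fun j => j ≤ ν), p1 j) +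
                (∑ j ∈ Finset.univ.filter (fun j => ν ≤ j), p2 j)) :
    C' ≤ (3 / 2) * (1 + ε) * Cstar :=
  par_case_analysis_two_machines_general n p1 p2 hJ C' L Cstar ε hε hLC hload hjobs ν hC'
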